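/- For every a > 0 and every integer n ≥ 1, 1/(2(n+a-1)) - 1/(12(n+a-1)²) < y_n - γ(a) ≤ 1/(2(n+a-1)) + β₄/(n+a-1)², where β₄ = a²(ψ(a) - ln(a)) + a/2, y_n = ψ(n+a) - ψ(a) - ln((n+a-1)/a), and γ(a) = ln(a) - ψ(a). These constants -1/12 and β₄ are best possible. -/

import Mathlib

open Real Filter Topology Set

noncomputable def digamma (x : ℝ) : ℝ := deriv Real.Gamma x / Real.Gamma x

noncomputable def trigamma (x : ℝ) : ℝ := deriv digamma x

/-!
Put `R t = ψ (t + 1) - log t - 1 / (2 t)`, so that `y_n - γ(a) = 1 / (2 t) + R t` at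
`t = n + a - 1`. The difference `R (t + 1) - R t` is the trapezoidal-rule error `E t` for
`∫ s in t..t+1, 1 / s`, and `R t → 0` because `log t ≤ ψ (t + 1) ≤ log (t + 1)` (convexity of
`log ∘ Γ`); hence `R t = -∑ₖ E (t + k)`. Truncating `log (1 + 1 / t) = ∑ₖ 2 x^(2k+1) / (2k + 1)`,
`x = 1 / (2 t + 1)`, squeezes `E t` between consecutive differences of `1 / (12 t²)` and of
`1 / (12 t²) - 1 / (120 t⁴)`, so `-1 / (12 t²) < R t ≤ -1 / (12 t²) + 1 / (120 t⁴)`. The same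
estimates show that `t² R t` decreases under `t ↦ t + 1`, whence `t² R t ≤ a² R a = β₄` for
`t = a + m`, with equality at `n = 1`; and the upper bound on `R` rules out any `c > -1/12`.
-/

section Digamma

variable {x : ℝ}

lemma differentiableAt_Gamma_of_pos (hx : 0 < x) : DifferentiableAt ℝ Gamma x :=
  differentiableAt_Gamma fun m hm => by
    have : (0 : ℝ) ≤ m := m.cast_nonneg
    linarith

lemma differentiableAt_log_Gamma (hx : 0 < x) : DifferentiableAt ℝ (fun y => log (Gamma y)) x :=
  (differentiableAt_Gamma_of_pos hx).log (Gamma_pos_of_pos hx).ne'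

lemma deriv_log_Gamma (hx : 0 < x) : deriv (fun y => log (Gamma y)) x = digamma x :=
  deriv.log (differentiableAt_Gamma_of_pos hx) (Gamma_pos_of_pos hx).ne'

lemma log_Gamma_add_one (hx : 0 < x) : log (Gamma (x + 1)) = log (Gamma x) + log x := by
  rw [Gamma_add_one hx.ne', log_mul hx.ne' (Gamma_pos_of_pos hx).ne', add_comm]

lemma digamma_add_one (hx : 0 < x) : digamma (x + 1) = digamma x + 1 / x := by
  have h : deriv (fun y => log (Gamma y)) (x + 1) = deriv (fun y => log (Gamma y) + log y) x := by
    rw [← deriv_comp_add_const]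
    refine EventuallyEq.deriv_eq ?_
    filter_upwards [eventually_gt_nhds hx] with y hy using log_Gamma_add_one hy
  rwa [deriv_fun_add (differentiableAt_log_Gamma hx) (differentiableAt_log hx.ne'), deriv_log,
    deriv_log_Gamma (by linarith), deriv_log_Gamma hx, ← one_div] at h

lemma slope_log_Gamma_one (hx : 0 < x) : slope (log ∘ Gamma) x (x + 1) = log x := by
  rw [slope_def_field, add_sub_cancel_left, div_one, Function.comp_apply, Function.comp_apply,
    log_Gamma_add_one hx, add_sub_cancel_left]

lemma digamma_le_log (hx : 0 < x) : digamma x ≤ log x := by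
  have h := convexOn_log_Gamma.deriv_le_slope (mem_Ioi.mpr hx) (mem_Ioi.mpr (by linarith))
    (lt_add_one x) (differentiableAt_log_Gamma hx)
  rwa [slope_log_Gamma_one hx, Function.comp_def, deriv_log_Gamma hx] at h

lemma log_le_digamma_add_one (hx : 0 < x) : log x ≤ digamma (x + 1) := by
  have h := convexOn_log_Gamma.slope_le_deriv (mem_Ioi.mpr hx) (mem_Ioi.mpr (by linarith))
    (lt_add_one x) (differentiableAt_log_Gamma (by linarith))
  rwa [slope_log_Gamma_one hx, Function.comp_def, deriv_log_Gamma (by linarith)] at h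

end Digamma

section LogSeries

variable {t : ℝ}

lemma log_one_add_inv_ge (ht : 0 < t) :
    2 * (1 / (2 * t + 1) + (1 / (2 * t + 1)) ^ 3 / 3 + (1 / (2 * t + 1)) ^ 5 / 5)
      ≤ log (1 + t⁻¹) := by
  have h := sum_le_hasSum (Finset.range 3) (fun k _ => by positivity) (hasSum_log_one_add_inv ht)
  simp only [Finset.sum_range_succ, Finset.sum_range_zero] at h
  set x := 1 / (2 * t + 1)
  norm_num at h
  linarith

/-- Beyond the third term of the series, `2 / (2k + 1) ≤ 2 / 7`, leaving a geometric series in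
`x ^ 2`, `x = 1 / (2 t + 1)`. -/
lemma log_one_add_inv_le (ht : 0 < t) :
    log (1 + t⁻¹) ≤ 2 * (1 / (2 * t + 1) + (1 / (2 * t + 1)) ^ 3 / 3 + (1 / (2 * t + 1)) ^ 5 / 5)
      + 2 / 7 * (1 / (2 * t + 1)) ^ 7 / (1 - (1 / (2 * t + 1)) ^ 2) := by
  set x := 1 / (2 * t + 1) with hx
  have hx0 : 0 ≤ x := by positivity
  have hx1 : x < 1 := by rw [hx, div_lt_one (by linarith)]; linarith
  have hx2 : x ^ 2 < 1 := by nlinarith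
  have tail := (hasSum_nat_add_iff' 3).mpr (hasSum_log_one_add_inv ht)
  have geom := (hasSum_geometric_of_lt_one (sq_nonneg x) hx2).mul_left (2 / 7 * x ^ 7)
  have h := hasSum_le (fun k => ?_) tail geom
  · simp only [Finset.sum_range_succ, Finset.sum_range_zero, ← hx] at h
    norm_num at h
    rw [div_eq_mul_inv _ (1 - x ^ 2)]
    linarith
  · rw [← hx, show 2 * (k + 3 : ℕ) + 1 = 7 + 2 * k by ring, pow_add, pow_mul]
    have hk : 1 / (2 * ((k + 3 : ℕ) : ℝ) + 1) ≤ 1 / 7 := by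
      rw [div_le_div_iff₀ (by positivity) (by norm_num)]
      push_cast
      linarith [k.cast_nonneg (α := ℝ)]
    have := mul_le_mul_of_nonneg_right hk (by positivity : 0 ≤ x ^ 7 * (x ^ 2) ^ k)
    linarith

end LogSeries

/-- The error of the trapezoidal rule for `∫ s in t..t+1, 1 / s = log (1 + t⁻¹)`. -/
noncomputable def trapezoidError (t : ℝ) : ℝ := (1 / t + 1 / (t + 1)) / 2 - log (1 + t⁻¹)

/-- The terms `-1 / (12 t²) + 1 / (120 t⁴)` of the asymptotic expansion of
`digamma (t + 1) - log t - 1 / (2 t)`, with the sign reversed. -/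
noncomputable def digammaCorrection (t : ℝ) : ℝ := 1 / (12 * t ^ 2) - 1 / (120 * t ^ 4)

section TrapezoidError

variable {t : ℝ}

lemma trapezoidError_le (ht : 0 < t) :
    trapezoidError t ≤ (1 / t + 1 / (t + 1)) / 2
      - 2 * (1 / (2 * t + 1) + (1 / (2 * t + 1)) ^ 3 / 3 + (1 / (2 * t + 1)) ^ 5 / 5) := by
  unfold trapezoidError
  linarith [log_one_add_inv_ge ht]

/- In the three estimates below, after replacing `log (1 + t⁻¹)` by a truncation of its series,
the gap is an explicit rational function of `t` with positive coefficients. -/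

lemma trapezoidError_lt (ht : 0 < t) :
    trapezoidError t < 1 / (12 * t ^ 2) - 1 / (12 * (t + 1) ^ 2) := by
  have hle := trapezoidError_le ht
  have gap : 1 / (12 * t ^ 2) - 1 / (12 * (t + 1) ^ 2) - ((1 / t + 1 / (t + 1)) / 2
      - 2 * (1 / (2 * t + 1) + (1 / (2 * t + 1)) ^ 3 / 3 + (1 / (2 * t + 1)) ^ 5 / 5))
      = (5 + 30 * t + 94 * t ^ 2 + 128 * t ^ 3 + 64 * t ^ 4)
        / (60 * t ^ 2 * (t + 1) ^ 2 * (2 * t + 1) ^ 5) := by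
    field_simp
    ring
  have gap_pos : 0 < (5 + 30 * t + 94 * t ^ 2 + 128 * t ^ 3 + 64 * t ^ 4)
      / (60 * t ^ 2 * (t + 1) ^ 2 * (2 * t + 1) ^ 5) := by positivity
  linarith

lemma digammaCorrection_sub_le_trapezoidError (ht : 0 < t) :
    digammaCorrection t - digammaCorrection (t + 1) ≤ trapezoidError t := by
  have hlog := log_one_add_inv_le ht
  have gap : (1 / t + 1 / (t + 1)) / 2
      - (2 * (1 / (2 * t + 1) + (1 / (2 * t + 1)) ^ 3 / 3 + (1 / (2 * t + 1)) ^ 5 / 5)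
        + 2 / 7 * (1 / (2 * t + 1)) ^ 7 / (1 - (1 / (2 * t + 1)) ^ 2))
      - (digammaCorrection t - digammaCorrection (t + 1))
      = (7 + 98 * t + 532 * t ^ 2 + 1508 * t ^ 3 + 2354 * t ^ 4 + 1920 * t ^ 5 + 640 * t ^ 6)
        / (840 * t ^ 4 * (t + 1) ^ 4 * (2 * t + 1) ^ 5) := by
    have : 1 - (1 / (2 * t + 1)) ^ 2 = 4 * t * (t + 1) / (2 * t + 1) ^ 2 := by
      field_simp
      ring
    rw [this, digammaCorrection, digammaCorrection]
    field_simp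
    ring
  have gap_nonneg : 0 ≤ (7 + 98 * t + 532 * t ^ 2 + 1508 * t ^ 3 + 2354 * t ^ 4 + 1920 * t ^ 5
      + 640 * t ^ 6) / (840 * t ^ 4 * (t + 1) ^ 4 * (2 * t + 1) ^ 5) := by positivity
  unfold trapezoidError
  linarith

lemma sq_mul_trapezoidError_le (ht : 0 < t) :
    t ^ 2 * trapezoidError t ≤ (2 * t + 1) * digammaCorrection (t + 1) := by
  have gap : (2 * t + 1) * digammaCorrection (t + 1) - t ^ 2 * ((1 / t + 1 / (t + 1)) / 2
      - 2 * (1 / (2 * t + 1) + (1 / (2 * t + 1)) ^ 3 / 3 + (1 / (2 * t + 1)) ^ 5 / 5))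
      = (9 * t + 68 * t ^ 2 + 258 * t ^ 3 + 532 * t ^ 4 + 588 * t ^ 5 + 320 * t ^ 6 + 64 * t ^ 7)
        / (120 * t * (t + 1) ^ 4 * (2 * t + 1) ^ 5) := by
    rw [digammaCorrection]
    field_simp
    ring
  have gap_nonneg : 0 ≤ (9 * t + 68 * t ^ 2 + 258 * t ^ 3 + 532 * t ^ 4 + 588 * t ^ 5
      + 320 * t ^ 6 + 64 * t ^ 7) / (120 * t * (t + 1) ^ 4 * (2 * t + 1) ^ 5) := by positivity
  have := mul_le_mul_of_nonneg_left (trapezoidError_le ht) (sq_nonneg t)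
  linarith

end TrapezoidError

lemma nonneg_of_tendsto_zero_of_le_add_one {φ : ℝ → ℝ} {t : ℝ} (hφ : Tendsto φ atTop (𝓝 0))
    (hstep : ∀ s, t ≤ s → φ (s + 1) ≤ φ s) : 0 ≤ φ t := by
  have hanti : Antitone fun m : ℕ => φ (t + m) := antitone_nat_of_succ_le fun m => by
    simpa [add_assoc] using hstep (t + m) (by simp)
  simpa using hanti.le_of_tendsto
    (hφ.comp (tendsto_atTop_add_const_left _ t tendsto_natCast_atTop_atTop)) 0

lemma tendsto_one_div_const_mul_pow_atTop {c : ℝ} (hc : 0 < c) {k : ℕ} (hk : k ≠ 0) :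
    Tendsto (fun t : ℝ => 1 / (c * t ^ k)) atTop (𝓝 0) :=
  tendsto_const_nhds.div_atTop ((tendsto_pow_atTop hk).const_mul_atTop hc)

lemma tendsto_digammaCorrection_atTop : Tendsto digammaCorrection atTop (𝓝 0) := by
  unfold digammaCorrection
  simpa only [sub_zero] using
    (tendsto_one_div_const_mul_pow_atTop (by norm_num : (0 : ℝ) < 12) two_ne_zero).sub
    (tendsto_one_div_const_mul_pow_atTop (by norm_num : (0 : ℝ) < 120) four_ne_zero)

noncomputable def digammaRemainder (t : ℝ) : ℝ := digamma (t + 1) - log t - 1 / (2 * t)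

section DigammaRemainder

variable {t : ℝ}

lemma digammaRemainder_add_one (ht : 0 < t) :
    digammaRemainder (t + 1) = digammaRemainder t + trapezoidError t := by
  have hlog : log (t + 1) = log t + log (1 + t⁻¹) := by
    rw [← log_mul ht.ne' (by positivity), mul_add, mul_inv_cancel₀ ht.ne', mul_one]
  unfold digammaRemainder trapezoidError
  rw [digamma_add_one (by linarith), hlog]
  field_simp
  ring

lemma abs_digammaRemainder_le (ht : 0 < t) : |digammaRemainder t| ≤ 1 / (2 * t) := by
  have hlower := log_le_digamma_add_one ht
  have hupper := digamma_le_log (show 0 < t + 1 by linarith)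
  have hlog : log (t + 1) - log t ≤ 1 / t := by
    rw [← log_div (by linarith) ht.ne']
    linarith [log_le_sub_one_of_pos (show 0 < (t + 1) / t by positivity),
      show (t + 1) / t - 1 = 1 / t by field_simp; ring]
  have half : 1 / t = 2 * (1 / (2 * t)) := by field_simp
  rw [abs_le]
  unfold digammaRemainder
  constructor <;> linarith

lemma tendsto_digammaRemainder_atTop : Tendsto digammaRemainder atTop (𝓝 0) :=
  squeeze_zero_norm' ((eventually_gt_atTop 0).mono fun _ ht => abs_digammaRemainder_le ht)
    (tendsto_one_div_const_mul_pow_atTop two_pos one_ne_zero |>.congr fun _ => by rw [pow_one])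

lemma neg_lt_digammaRemainder (ht : 0 < t) : -(1 / (12 * t ^ 2)) < digammaRemainder t := by
  have htendsto : Tendsto (fun s => digammaRemainder s + 1 / (12 * s ^ 2)) atTop (𝓝 0) := by
    simpa only [add_zero] using tendsto_digammaRemainder_atTop.add
      (tendsto_one_div_const_mul_pow_atTop (by norm_num : (0 : ℝ) < 12) two_ne_zero)
  have hle := nonneg_of_tendsto_zero_of_le_add_one htendsto (t := t + 1) fun r hr => by
    have hr : 0 < r := by linarith
    linarith [digammaRemainder_add_one hr, trapezoidError_lt hr]
  linarith [digammaRemainder_add_one ht, trapezoidError_lt ht]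

lemma digammaRemainder_le_neg_digammaCorrection (ht : 0 < t) :
    digammaRemainder t ≤ -digammaCorrection t := by
  have := nonneg_of_tendsto_zero_of_le_add_one
    (φ := fun s => -(digammaRemainder s + digammaCorrection s))
    (by simpa using (tendsto_digammaRemainder_atTop.add tendsto_digammaCorrection_atTop).neg)
    fun r hr => by
      have hr : 0 < r := ht.trans_le hr
      linarith [digammaRemainder_add_one hr, digammaCorrection_sub_le_trapezoidError hr]
  linarith

lemma sq_mul_digammaRemainder_add_one_le (ht : 0 < t) :
    (t + 1) ^ 2 * digammaRemainder (t + 1) ≤ t ^ 2 * digammaRemainder t := by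
  have hupper := digammaRemainder_le_neg_digammaCorrection (show 0 < t + 1 by linarith)
  calc (t + 1) ^ 2 * digammaRemainder (t + 1)
      = t ^ 2 * digammaRemainder t + t ^ 2 * trapezoidError t
        + (2 * t + 1) * digammaRemainder (t + 1) := by
        rw [digammaRemainder_add_one ht]; ring
    _ ≤ t ^ 2 * digammaRemainder t + (2 * t + 1) * digammaCorrection (t + 1)
        + (2 * t + 1) * -digammaCorrection (t + 1) := by
        have := mul_le_mul_of_nonneg_left hupper (by positivity : (0 : ℝ) ≤ 2 * t + 1)
        linarith [sq_mul_trapezoidError_le ht]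
    _ = t ^ 2 * digammaRemainder t := by ring

lemma sq_mul_digammaRemainder_add_nat_le {a : ℝ} (ha : 0 < a) (m : ℕ) :
    (a + m) ^ 2 * digammaRemainder (a + m) ≤ a ^ 2 * digammaRemainder a := by
  have hanti : Antitone fun k : ℕ => (a + k) ^ 2 * digammaRemainder (a + k) :=
    antitone_nat_of_succ_le fun k => by
      simpa [add_assoc] using sq_mul_digammaRemainder_add_one_le (by positivity : 0 < a + k)
  simpa using hanti (Nat.zero_le m)

lemma eventually_digammaRemainder_le {c : ℝ} (hc : -1 / 12 < c) :
    ∀ᶠ t in atTop, digammaRemainder t ≤ c / t ^ 2 := by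
  filter_upwards [(tendsto_one_div_const_mul_pow_atTop (by norm_num : (0 : ℝ) < 120)
    two_ne_zero).eventually
    (gt_mem_nhds (show (0 : ℝ) < c + 1 / 12 by linarith)), eventually_gt_atTop 0] with t hsmall ht
  calc digammaRemainder t ≤ -digammaCorrection t := digammaRemainder_le_neg_digammaCorrection ht
    _ = (-1 / 12 + 1 / (120 * t ^ 2)) / t ^ 2 := by unfold digammaCorrection; field_simp; ring
    _ ≤ c / t ^ 2 := by gcongr; linarith

end DigammaRemainder

theorem main_thm2_part2 (a : ℝ) (ha : 0 < a) :
    let γa : ℝ := Real.log a - digamma a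
    let y : ℕ → ℝ := fun n => digamma (n + a) - digamma a - Real.log ((n + a - 1) / a)
    let β₄ : ℝ := a ^ 2 * (digamma a - Real.log a) + a / 2
    (∀ n : ℕ, 1 ≤ n →
      1 / (2 * (n + a - 1)) - 1 / (12 * (n + a - 1) ^ 2) < y n - γa ∧
      y n - γa ≤ 1 / (2 * (n + a - 1)) + β₄ / (n + a - 1) ^ 2) ∧
    y 1 - γa = 1 / (2 * a) + β₄ / a ^ 2 ∧
    (∀ c : ℝ, -1/12 < c → ∃ n : ℕ, 1 ≤ n ∧
      y n - γa ≤ 1 / (2 * (n + a - 1)) + c / (n + a - 1) ^ 2) := by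
  intro γa y β₄
  have ht : ∀ m : ℕ, ((m + 1 : ℕ) : ℝ) + a - 1 = a + m := fun m => by push_cast; ring
  have hy : ∀ m : ℕ, y (m + 1) - γa = digammaRemainder (a + m) + 1 / (2 * (a + m)) := fun m => by
    have hpos : 0 < a + m := by positivity
    simp only [y, γa, digammaRemainder, ht, log_div hpos.ne' ha.ne']
    push_cast
    ring_nf
  have hβ : β₄ = a ^ 2 * digammaRemainder a := by
    simp only [β₄, digammaRemainder, digamma_add_one ha]
    field_simp
    ring
  refine ⟨fun n hn => ?_, ?_, fun c hc => ?_⟩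
  · obtain ⟨m, rfl⟩ := Nat.exists_eq_add_of_le' hn
    have hpos : 0 < a + m := by positivity
    have hupper : digammaRemainder (a + m) ≤ a ^ 2 * digammaRemainder a / (a + m) ^ 2 := by
      rw [le_div_iff₀ (by positivity)]
      linarith [sq_mul_digammaRemainder_add_nat_le ha m]
    rw [ht, hy, hβ]
    exact ⟨by linarith [neg_lt_digammaRemainder hpos], by linarith⟩
  · have h1 := hy 0
    simp only [zero_add, Nat.cast_zero, add_zero] at h1
    rw [h1, hβ, mul_div_cancel_left₀ _ (pow_ne_zero 2 ha.ne'), add_comm]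
  · obtain ⟨m, hm⟩ := ((tendsto_atTop_add_const_left _ a tendsto_natCast_atTop_atTop).eventually
      (eventually_digammaRemainder_le hc)).exists
    exact ⟨m + 1, by omega, by rw [ht, hy]; linarith [hm]⟩
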